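/- Let $X$ be a metric space with more than one point, $2 \leq m \leq \#X$, and $\lambda > 0$. Then $2 d_{GH}(\lambda\Delta_m, X) = \inf_{D} \max\{\operatorname{diam} D, \lambda - \alpha(D), \operatorname{diam} X - \lambda\}$, where the infimum ranges over all partitions $D = \{X_i\}$ of $X$ into $m$ nonempty subsets. -/

import Mathlib

open Real

/-- The simplex `λΔₘ`: metric on `Fin m` with all nonzero distances `λ`. -/
noncomputable def simplexSpace (lam : ℝ) (hlam : 0 < lam) (m : ℕ) : MetricSpace (Fin m) :=
  MetricSpace.ofDistTopology (fun x y => if x = y then 0 else lam)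
    (by simp) (fun x y => by simp [eq_comm])
    (by intro x y z; split_ifs <;> simp_all <;> linarith)
    (fun s => ⟨fun _ x hx => ⟨lam, hlam, fun y hy => by
        by_cases h : x = y
        · exact h ▸ hx
        · simp only [if_neg h] at hy; exact absurd hy (lt_irrefl _)⟩,
      fun _ => isOpen_discrete s⟩)
    (fun x y h => by by_contra hxy; simp only [if_neg hxy] at h; exact hlam.ne' h)

/-- `R ⊆ X × Y` is a correspondence. -/
def IsCorr {X Y : Type*} (R : Set (X × Y)) : Prop :=
  (∀ x, ∃ y, (x, y) ∈ R) ∧ (∀ y, ∃ x, (x, y) ∈ R)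

/-- Distortion of a relation between metric spaces. -/
noncomputable def corrDis {X Y : Type*} [MetricSpace X] [MetricSpace Y]
    (R : Set (X × Y)) : ℝ :=
  sSup {r | ∃ p ∈ R, ∃ q ∈ R, r = |dist p.1 q.1 - dist p.2 q.2|}

/-- Gromov–Hausdorff distance via correspondences. -/
noncomputable def ghCorrDist (X Y : Type*) [MetricSpace X] [MetricSpace Y] : ℝ :=
  (1 / 2) * sInf {r | ∃ R : Set (X × Y), IsCorr R ∧ r = corrDis R}

open Set Metric Function Bornology

/-!
A partition `D` of `X` indexed by the vertices of `λΔₘ` gives the correspondence relating each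
vertex to its part, of distortion at most `max {diam D, λ - α(D), diam X - λ}`. Conversely, let
`R` be a correspondence of distortion `r` and relate each point `x` to some vertex `f x`. Points
with the same vertex are at distance `≤ r`, points with different vertices at distance
`≥ λ - r`, and `diam X ≤ r + λ`. If `r < λ`, no point is related to two vertices, so `f` is onto
and its fibres form a partition of cost `≤ r`. If `r ≥ λ`, the term `λ - α(D)` is harmless and any
refinement of the fibres of `f` into exactly `m` nonempty parts (possible as `m ≤ #X`) will do.
-/

theorem exists_surjective_refining {X ι : Type*} [Finite X] [Finite ι] (f : X → ι)
    (hcard : Nat.card ι ≤ Nat.card X) :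
    ∃ g : X → ι, Surjective g ∧ ∀ x y, g x = g y → f x = f y := by
  classical
  -- `rep x` is a representative of the fibre of `f` through `x`; enlarge the set of
  -- representatives to a set `T` with exactly `Nat.card ι` elements and retract `X` onto `T`.
  set rep : X → X := fun x => rangeSplitting f ⟨f x, mem_range_self x⟩
  have hrep : ∀ x, f (rep x) = f x := fun x => apply_rangeSplitting f _
  have hreps : (range rep).ncard ≤ Nat.card ι :=
    calc (range rep).ncard ≤ (univ : Set ι).ncard :=
          ncard_le_ncard_of_injOn f (fun _ _ => mem_univ _) (by
            rintro _ ⟨x, rfl⟩ _ ⟨y, rfl⟩ hxy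
            rw [hrep, hrep] at hxy
            exact congrArg (rangeSplitting f) (Subtype.ext hxy))
      _ = Nat.card ι := ncard_univ ι
  obtain ⟨T, hrepT, -, hT⟩ := exists_subsuperset_card_eq (subset_univ (range rep)) hreps
    (by rwa [ncard_univ])
  obtain ⟨e⟩ : Nonempty (T ≃ ι) := Finite.card_eq.mp (by rw [Nat.card_coe_set_eq, hT])
  let retract : X → T := fun x => if h : x ∈ T then ⟨x, h⟩ else ⟨rep x, hrepT (mem_range_self x)⟩
  have hf_retract : ∀ x, f (retract x) = f x := by
    intro x
    by_cases h : x ∈ T <;> simp [retract, h, hrep]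
  refine ⟨e ∘ retract, fun i => ⟨e.symm i, by simp [retract]⟩, fun x y hxy => ?_⟩
  rw [← hf_retract x, ← hf_retract y, e.injective hxy]

section Distortion

variable {X Y : Type*} [MetricSpace X] [MetricSpace Y]

theorem two_mul_ghCorrDist :
    2 * ghCorrDist X Y = sInf {r | ∃ R : Set (X × Y), IsCorr R ∧ r = corrDis R} := by
  unfold ghCorrDist
  ring

theorem corrDis_nonneg (R : Set (X × Y)) : 0 ≤ corrDis R :=
  Real.sSup_nonneg (by rintro _ ⟨p, -, q, -, rfl⟩; exact abs_nonneg _)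

theorem corrDis_le {R : Set (X × Y)} {r : ℝ} (hr : 0 ≤ r)
    (h : ∀ p ∈ R, ∀ q ∈ R, |dist p.1 q.1 - dist p.2 q.2| ≤ r) : corrDis R ≤ r :=
  Real.sSup_le (by rintro _ ⟨p, hp, q, hq, rfl⟩; exact h p hp q hq) hr

variable [BoundedSpace X] [BoundedSpace Y]

theorem abs_dist_sub_dist_le_corrDis {R : Set (X × Y)} {p q : X × Y} (hp : p ∈ R) (hq : q ∈ R) :
    |dist p.1 q.1 - dist p.2 q.2| ≤ corrDis R := by
  refine le_csSup ⟨diam (univ : Set X) + diam (univ : Set Y), ?_⟩ ⟨p, hp, q, hq, rfl⟩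
  rintro _ ⟨p, -, q, -, rfl⟩
  have hX := dist_le_diam_of_mem (IsBounded.all _) (mem_univ p.1) (mem_univ q.1)
  have hY := dist_le_diam_of_mem (IsBounded.all _) (mem_univ p.2) (mem_univ q.2)
  rw [abs_le]
  constructor <;> linarith [dist_nonneg (x := p.1) (y := q.1), dist_nonneg (x := p.2) (y := q.2)]

theorem dist_le_corrDis_of_mem {R : Set (X × Y)} {x : X} {y y' : Y}
    (hy : (x, y) ∈ R) (hy' : (x, y') ∈ R) : dist y y' ≤ corrDis R := by
  simpa using abs_dist_sub_dist_le_corrDis hy hy'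

end Distortion

section Partition

variable {ι X : Type*}

def IsIndexedPartition (D : ι → Set X) : Prop :=
  (∀ i, (D i).Nonempty) ∧ Pairwise (Disjoint on D) ∧ ⋃ i, D i = univ

theorem isIndexedPartition_fibers {g : X → ι} (hg : Surjective g) :
    IsIndexedPartition fun i => g ⁻¹' {i} :=
  ⟨fun i => hg i, fun _ _ hij => disjoint_left.mpr fun _ hi hj => hij (hi.symm.trans hj),
    by ext; simp⟩

theorem isCorr_of_isIndexedPartition {D : ι → Set X} (hD : IsIndexedPartition D) :
    IsCorr {p : ι × X | p.2 ∈ D p.1} :=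
  ⟨hD.1, fun x => mem_iUnion.mp (hD.2.2 ▸ mem_univ x)⟩

variable [MetricSpace X]

/-- `α(D)`; note that it is the junk value `sInf ∅ = 0` when `D` has fewer than two parts. -/
noncomputable def partitionGap (D : ι → Set X) : ℝ :=
  sInf {d | ∃ i j, i ≠ j ∧ ∃ a ∈ D i, ∃ b ∈ D j, d = dist a b}

noncomputable def partitionCost (lam : ℝ) (D : ι → Set X) : ℝ :=
  max (⨆ i, diam (D i)) (max (lam - partitionGap D) (diam (univ : Set X) - lam))

theorem partitionCost_nonneg (lam : ℝ) (D : ι → Set X) : 0 ≤ partitionCost lam D :=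
  le_max_of_le_left (Real.iSup_nonneg fun _ => diam_nonneg)

theorem partitionGap_le_dist {D : ι → Set X} {i j : ι} (hij : i ≠ j) {a b : X}
    (ha : a ∈ D i) (hb : b ∈ D j) : partitionGap D ≤ dist a b :=
  csInf_le ⟨0, by rintro _ ⟨-, -, -, a, -, b, -, rfl⟩; exact dist_nonneg⟩
    ⟨i, j, hij, a, ha, b, hb, rfl⟩

theorem partitionCost_fibers_le [Nontrivial ι] {lam r : ℝ} {g : X → ι} (hg : Surjective g)
    (hr : 0 ≤ r) (hsame : ∀ x y, g x = g y → dist x y ≤ r)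
    (hdiff : ∀ x y, g x ≠ g y → lam - r ≤ dist x y) (hdiam : diam (univ : Set X) - lam ≤ r) :
    partitionCost lam (fun i => g ⁻¹' {i}) ≤ r := by
  refine max_le (Real.iSup_le (fun i => diam_le_of_forall_dist_le hr ?_) hr) (max_le ?_ hdiam)
  · rintro x (hx : g x = i) y (hy : g y = i)
    exact hsame x y (hx.trans hy.symm)
  · obtain ⟨i, j, hij⟩ := exists_pair_ne ι
    obtain ⟨a, rfl⟩ := hg i
    obtain ⟨b, rfl⟩ := hg j
    have : lam - r ≤ partitionGap fun i => g ⁻¹' {i} :=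
      le_csInf ⟨dist a b, g a, g b, hij, a, rfl, b, rfl, rfl⟩
        (by rintro _ ⟨-, -, hij, x, rfl, y, rfl, rfl⟩; exact hdiff x y hij)
    linarith

end Partition

section Simplex

variable {ι X : Type*} [MetricSpace ι] [MetricSpace X] {lam : ℝ} {R : Set (ι × X)}

section Bounded

variable [BoundedSpace X]

theorem corrDis_le_partitionCost (hι : ∀ i j : ι, i ≠ j → dist i j = lam) (D : ι → Set X) :
    corrDis {p : ι × X | p.2 ∈ D p.1} ≤ partitionCost lam D := by
  have hbdd : BddAbove (range fun i => diam (D i)) :=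
    ⟨diam (univ : Set X), by rintro _ ⟨i, rfl⟩; exact diam_mono (subset_univ _) (IsBounded.all _)⟩
  refine corrDis_le (partitionCost_nonneg lam D) ?_
  rintro ⟨i, a⟩ (ha : a ∈ D i) ⟨j, b⟩ (hb : b ∈ D j)
  by_cases hij : i = j
  · subst hij
    have : dist a b ≤ diam (D i) := dist_le_diam_of_mem (IsBounded.all _) ha hb
    rw [dist_self, zero_sub, abs_neg, abs_of_nonneg dist_nonneg]
    exact le_max_of_le_left (this.trans (le_ciSup hbdd i))
  · have hgap := partitionGap_le_dist hij ha hb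
    have hdiam := dist_le_diam_of_mem (IsBounded.all _) (mem_univ a) (mem_univ b)
    rw [hι i j hij, abs_sub_le_iff]
    constructor
    · exact le_max_of_le_right (le_max_of_le_left (by linarith))
    · exact le_max_of_le_right (le_max_of_le_right (by linarith))

variable [BoundedSpace ι]

theorem sub_corrDis_le_dist (hι : ∀ i j : ι, i ≠ j → dist i j = lam) {i j : ι} (hij : i ≠ j)
    {x y : X} (hx : (i, x) ∈ R) (hy : (j, y) ∈ R) : lam - corrDis R ≤ dist x y := by
  have h := abs_dist_sub_dist_le_corrDis hx hy
  rw [hι i j hij, abs_le] at h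
  linarith [h.1]

theorem eq_of_corrDis_lt (hι : ∀ i j : ι, i ≠ j → dist i j = lam) (hR : corrDis R < lam)
    {i j : ι} {x : X} (hi : (i, x) ∈ R) (hj : (j, x) ∈ R) : i = j := by
  by_contra hij
  have := sub_corrDis_le_dist hι hij hi hj
  rw [dist_self] at this
  linarith

theorem diam_univ_sub_le_corrDis (hι : ∀ i j : ι, i ≠ j → dist i j = lam) (hlam : 0 ≤ lam)
    (hR : IsCorr R) : diam (univ : Set X) - lam ≤ corrDis R := by
  have hr := corrDis_nonneg R
  suffices diam (univ : Set X) ≤ corrDis R + lam by linarith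
  refine diam_le_of_forall_dist_le (by linarith) fun x _ y _ => ?_
  obtain ⟨i, hx⟩ := hR.2 x
  obtain ⟨j, hy⟩ := hR.2 y
  have h := abs_dist_sub_dist_le_corrDis hx hy
  rw [abs_le] at h
  by_cases hij : i = j
  · simp only [hij, dist_self] at h
    linarith [h.1]
  · simp only [hι i j hij] at h
    linarith [h.1]

end Bounded

variable [Finite ι] [Finite X] [Nontrivial ι]

theorem exists_partitionCost_le_corrDis (hι : ∀ i j : ι, i ≠ j → dist i j = lam)
    (hlam : 0 ≤ lam) (hcard : Nat.card ι ≤ Nat.card X)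
    (hR : IsCorr R) : ∃ D : ι → Set X, IsIndexedPartition D ∧ partitionCost lam D ≤ corrDis R := by
  choose f hf using hR.2
  obtain ⟨g, hg, hsame, hdiff⟩ : ∃ g : X → ι, Surjective g ∧
      (∀ x y, g x = g y → dist x y ≤ corrDis R) ∧
      (∀ x y, g x ≠ g y → lam - corrDis R ≤ dist x y) := by
    rcases lt_or_ge (corrDis R) lam with hlt | hle
    · refine ⟨f, fun i => ?_, fun x y hxy => dist_le_corrDis_of_mem (hf x) (hxy ▸ hf y),
        fun x y hxy => sub_corrDis_le_dist hι hxy (hf x) (hf y)⟩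
      obtain ⟨x, hx⟩ := hR.1 i
      exact ⟨x, eq_of_corrDis_lt hι hlt (hf x) hx⟩
    · obtain ⟨g, hg, hgf⟩ := exists_surjective_refining f hcard
      refine ⟨g, hg, fun x y hxy => dist_le_corrDis_of_mem (hf x) (hgf x y hxy ▸ hf y),
        fun x y _ => ?_⟩
      linarith [dist_nonneg (x := x) (y := y)]
  exact ⟨_, isIndexedPartition_fibers hg, partitionCost_fibers_le hg (corrDis_nonneg R) hsame hdiff
    (diam_univ_sub_le_corrDis hι hlam hR)⟩

theorem two_mul_ghCorrDist_eq_sInf_partitionCost (hι : ∀ i j : ι, i ≠ j → dist i j = lam)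
    (hlam : 0 ≤ lam) (hcard : Nat.card ι ≤ Nat.card X) :
    2 * ghCorrDist ι X =
      sInf {r | ∃ D : ι → Set X, IsIndexedPartition D ∧ r = partitionCost lam D} := by
  rw [two_mul_ghCorrDist]
  have : Nonempty X := (Nat.card_pos_iff.mp (Finite.card_pos.trans_le hcard)).1
  have huniv : IsCorr (univ : Set (ι × X)) :=
    ⟨fun _ => ⟨Classical.arbitrary X, trivial⟩, fun _ => ⟨Classical.arbitrary ι, trivial⟩⟩
  apply le_antisymm
  · obtain ⟨D, hD, -⟩ := exists_partitionCost_le_corrDis hι hlam hcard huniv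
    refine le_csInf ⟨_, D, hD, rfl⟩ ?_
    rintro _ ⟨D, hD, rfl⟩
    exact csInf_le_of_le ⟨0, by rintro _ ⟨R, -, rfl⟩; exact corrDis_nonneg R⟩
      ⟨_, isCorr_of_isIndexedPartition hD, rfl⟩ (corrDis_le_partitionCost hι D)
  · refine le_csInf ⟨_, univ, huniv, rfl⟩ ?_
    rintro _ ⟨R, hR, rfl⟩
    obtain ⟨D, hD, hle⟩ := exists_partitionCost_le_corrDis hι hlam hcard hR
    exact csInf_le_of_le ⟨0, by rintro _ ⟨D, -, rfl⟩; exact partitionCost_nonneg lam D⟩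
      ⟨D, hD, rfl⟩ hle

end Simplex

theorem stmt13 (X : Type*) [MetricSpace X] [Finite X]
    (m : ℕ) (hm : 2 ≤ m) (hmX : m ≤ Nat.card X) (lam : ℝ) (hlam : 0 < lam) :
    2 * @ghCorrDist (Fin m) X (simplexSpace lam hlam m) _ =
      sInf {r | ∃ D : Fin m → Set X, (∀ i, (D i).Nonempty) ∧
        Pairwise (Function.onFun Disjoint D) ∧ (⋃ i, D i) = Set.univ ∧
        r = max (⨆ i, Metric.diam (D i))
            (max (lam - sInf {d | ∃ i j, i ≠ j ∧ ∃ a ∈ D i, ∃ b ∈ D j, d = dist a b})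
                 (Metric.diam (Set.univ : Set X) - lam))} := by
  let := simplexSpace lam hlam m
  have := Fin.nontrivial_iff_two_le.mpr hm
  have h := two_mul_ghCorrDist_eq_sInf_partitionCost (ι := Fin m) (X := X) (lam := lam)
    (fun i j hij => (if_neg hij : (if i = j then 0 else lam) = lam)) hlam.le (by simpa using hmX)
  simpa only [IsIndexedPartition, partitionCost, partitionGap, and_assoc] using h
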